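/- Let θ, D, T, Z be random variables on a common probability space taking values in finite sets. Suppose (i) T and the pair (D, Z) are conditionally independent given θ, and (ii) Z and θ are conditionally independent given D (i.e., θ → D → Z forms a Markov chain, so Z is a strategic curation of D). Then the mutual information satisfies I(Z; T) ≤ I(D; T). -/

import Mathlib

open Finset
open scoped Classical

/-- Probability of an event under a pmf on a finite sample space. -/
noncomputable def pr {Ω : Type*} [Fintype Ω] (p : Ω → ℝ) (E : Ω → Prop) : ℝ :=
  ∑ ω, if E ω then p ω else 0

/-- Conditional probability `p(E | F)`. -/
noncomputable def cpr {Ω : Type*} [Fintype Ω] (p : Ω → ℝ) (E F : Ω → Prop) : ℝ :=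
  pr p (fun ω => E ω ∧ F ω) / pr p F

/-- `X` and `Y` are conditionally independent given `Z`. -/
def CondIndepRV {Ω A B C : Type*} [Fintype Ω] (p : Ω → ℝ)
    (X : Ω → A) (Y : Ω → B) (Z : Ω → C) : Prop :=
  ∀ x y z, 0 < pr p (fun ω => Z ω = z) →
    cpr p (fun ω => X ω = x ∧ Y ω = y) (fun ω => Z ω = z) =
      cpr p (fun ω => X ω = x) (fun ω => Z ω = z) *
      cpr p (fun ω => Y ω = y) (fun ω => Z ω = z)

/-- Mutual information of two discrete random variables. -/
noncomputable def mInfo {Ω A B : Type*} [Fintype Ω] [Fintype A] [Fintype B]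
    (p : Ω → ℝ) (X : Ω → A) (Y : Ω → B) : ℝ :=
  ∑ x, ∑ y,
    if 0 < pr p (fun ω => X ω = x ∧ Y ω = y) then
      pr p (fun ω => X ω = x ∧ Y ω = y) *
        Real.log (pr p (fun ω => X ω = x ∧ Y ω = y) /
          (pr p (fun ω => X ω = x) * pr p (fun ω => Y ω = y)))
    else 0

/-!
The two conditional independences give `p(d, z, t, θ) p(d) = p(d, z) p(d, t, θ)` (divide by
`p(θ)` where it is positive; both sides vanish elsewhere), and summing over `θ` shows that `Z` and
`T` are conditionally independent given `D`. With `q(d, z, t) = p(d, z) p(z, t) / p(z)` this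
Markov property turns the difference of the mutual informations into
`I(D; T) - I(Z; T) = ∑ p(d, z, t) log (p(d, z, t) / q(d, z, t))`, which is at least
`∑ (p - q) = 0` because `log x ≥ 1 - 1 / x`.
-/

open Real

section Probability

variable {Ω : Type*} [Fintype Ω] {p : Ω → ℝ}

lemma pr_congr {E F : Ω → Prop} (h : ∀ ω, E ω ↔ F ω) : pr p E = pr p F :=
  Finset.sum_congr rfl fun ω _ => by simp only [h ω]

lemma pr_nonneg (hp : ∀ ω, 0 ≤ p ω) (E : Ω → Prop) : 0 ≤ pr p E :=
  Finset.sum_nonneg fun ω _ => by split_ifs <;> simp [hp ω]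

lemma pr_mono (hp : ∀ ω, 0 ≤ p ω) {E F : Ω → Prop} (h : ∀ ω, E ω → F ω) :
    pr p E ≤ pr p F :=
  Finset.sum_le_sum fun ω _ => by
    by_cases hE : E ω
    · simp [hE, h ω hE]
    · simp only [hE, if_false]; split_ifs <;> simp [hp ω]

lemma pr_and_eq_zero (hp : ∀ ω, 0 ≤ p ω) {F : Ω → Prop} (hF : pr p F = 0) (E : Ω → Prop) :
    pr p (fun ω => E ω ∧ F ω) = 0 :=
  le_antisymm (hF ▸ pr_mono hp fun _ h => h.2) (pr_nonneg hp _)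

lemma sum_pr_of_iff {A : Type*} [Fintype A] (X : Ω → A) {E : Ω → Prop} {F : A → Ω → Prop}
    (h : ∀ x ω, F x ω ↔ X ω = x ∧ E ω) : ∑ x, pr p (F x) = pr p E := by
  rw [Finset.sum_congr rfl fun x _ => pr_congr (h x)]
  unfold pr
  rw [Finset.sum_comm]
  refine Finset.sum_congr rfl fun ω _ => ?_
  by_cases hE : E ω <;> simp [hE]

variable {A B C Θ : Type*}

lemma condIndepRV_iff (hp : ∀ ω, 0 ≤ p ω) {X : Ω → A} {Y : Ω → B} {W : Ω → C} :
    CondIndepRV p X Y W ↔ ∀ x y w,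
      pr p (fun ω => (X ω = x ∧ Y ω = y) ∧ W ω = w) * pr p (fun ω => W ω = w) =
        pr p (fun ω => X ω = x ∧ W ω = w) * pr p (fun ω => Y ω = y ∧ W ω = w) := by
  refine forall₃_congr fun x y w => ⟨fun h => ?_, fun h hw => ?_⟩
  · rcases (pr_nonneg hp fun ω => W ω = w).eq_or_lt with hw | hw
    · rw [← hw, mul_zero, pr_and_eq_zero hp hw.symm, zero_mul]
    · have := h hw
      simp only [cpr] at this
      field_simp at this
      linear_combination this
  · simp only [cpr]
    field_simp
    linear_combination h

lemma CondIndepRV.fst [Fintype C] (hp : ∀ ω, 0 ≤ p ω) {V : Ω → A} {X : Ω → B} {Y : Ω → C}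
    {W : Ω → Θ} (h : CondIndepRV p V (fun ω => (X ω, Y ω)) W) : CondIndepRV p V X W := by
  rw [condIndepRV_iff hp] at h ⊢
  intro v x w
  have hVX : ∑ y, pr p (fun ω => (V ω = v ∧ (X ω, Y ω) = (x, y)) ∧ W ω = w) =
      pr p (fun ω => (V ω = v ∧ X ω = x) ∧ W ω = w) :=
    sum_pr_of_iff Y fun _ _ => by simp only [Prod.mk.injEq]; tauto
  have hX : ∑ y, pr p (fun ω => (X ω, Y ω) = (x, y) ∧ W ω = w) =
      pr p (fun ω => X ω = x ∧ W ω = w) :=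
    sum_pr_of_iff Y fun _ _ => by simp only [Prod.mk.injEq]; tauto
  rw [← hVX, ← hX, Finset.sum_mul, Finset.mul_sum]
  exact Finset.sum_congr rfl fun y _ => h v (x, y) w

lemma CondIndepRV.of_markov [Fintype Θ] [Fintype B] (hp : ∀ ω, 0 ≤ p ω) {W : Ω → Θ}
    {X : Ω → A} {Y : Ω → B} {V : Ω → C} (hVW : CondIndepRV p V (fun ω => (X ω, Y ω)) W)
    (hYW : CondIndepRV p Y W X) : CondIndepRV p Y V X := by
  have hVXW := hVW.fst hp
  rw [condIndepRV_iff hp] at hVW hYW hVXW ⊢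
  intro y v x
  have key : ∀ w,
      pr p (fun ω => ((Y ω = y ∧ V ω = v) ∧ X ω = x) ∧ W ω = w) * pr p (fun ω => X ω = x) =
        pr p (fun ω => Y ω = y ∧ X ω = x) * pr p (fun ω => (V ω = v ∧ X ω = x) ∧ W ω = w) := by
    intro w
    have h₁ :
        pr p (fun ω => ((Y ω = y ∧ V ω = v) ∧ X ω = x) ∧ W ω = w) * pr p (fun ω => W ω = w) =
          pr p (fun ω => V ω = v ∧ W ω = w) * pr p (fun ω => (Y ω = y ∧ W ω = w) ∧ X ω = x) := by
      convert hVW v (x, y) w using 2 <;>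
        exact pr_congr fun ω => by simp only [Prod.mk.injEq]; tauto
    have h₂ : pr p (fun ω => (Y ω = y ∧ W ω = w) ∧ X ω = x) * pr p (fun ω => X ω = x) =
        pr p (fun ω => Y ω = y ∧ X ω = x) * pr p (fun ω => X ω = x ∧ W ω = w) := by
      convert hYW y w x using 2; exact pr_congr fun ω => and_comm
    have h₃ := hVXW v x w
    rcases (pr_nonneg hp fun ω => W ω = w).eq_or_lt with hw | hw
    · rw [pr_and_eq_zero hp hw.symm, pr_and_eq_zero hp hw.symm, zero_mul, mul_zero]
    · refine mul_right_cancel₀ hw.ne' ?_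
      linear_combination pr p (fun ω => X ω = x) * h₁ + pr p (fun ω => V ω = v ∧ W ω = w) * h₂ -
        pr p (fun ω => Y ω = y ∧ X ω = x) * h₃
  rw [← sum_pr_of_iff W (E := fun ω => (Y ω = y ∧ V ω = v) ∧ X ω = x) fun _ _ => and_comm,
    ← sum_pr_of_iff W (E := fun ω => V ω = v ∧ X ω = x) fun _ _ => and_comm,
    Finset.sum_mul, Finset.mul_sum]
  exact Finset.sum_congr rfl fun w _ => key w

end Probability

lemma sub_le_mul_log_div {a r : ℝ} (ha : 0 ≤ a) (hr : 0 ≤ r) (h : 0 < a → 0 < r) :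
    a - r ≤ a * log (a / r) := by
  rcases ha.eq_or_lt with rfl | ha
  · simpa using hr
  · have hr := h ha
    have := one_sub_inv_le_log_of_pos (div_pos ha hr)
    rw [inv_div] at this
    calc a - r = a * (1 - r / a) := by field_simp
      _ ≤ a * log (a / r) := by gcongr

section MutualInformation

variable {Ω A B C : Type*} [Fintype Ω] {p : Ω → ℝ}

noncomputable def pmi (p : Ω → ℝ) (X : Ω → A) (Y : Ω → B) (x : A) (y : B) : ℝ :=
  log (pr p (fun ω => X ω = x ∧ Y ω = y) / (pr p (fun ω => X ω = x) * pr p (fun ω => Y ω = y)))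

lemma pr_sub_le_mul_pmi_sub_pmi (hp : ∀ ω, 0 ≤ p ω) {X : Ω → A} {Y : Ω → B} {W : Ω → C}
    (h : CondIndepRV p Y W X) (x : A) (y : B) (w : C) :
    pr p (fun ω => X ω = x ∧ Y ω = y ∧ W ω = w) -
        pr p (fun ω => X ω = x ∧ Y ω = y) * pr p (fun ω => Y ω = y ∧ W ω = w) /
          pr p (fun ω => Y ω = y) ≤
      pr p (fun ω => X ω = x ∧ Y ω = y ∧ W ω = w) * (pmi p X W x w - pmi p Y W y w) := by
  have hchain : pr p (fun ω => X ω = x ∧ Y ω = y ∧ W ω = w) * pr p (fun ω => X ω = x) =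
      pr p (fun ω => X ω = x ∧ Y ω = y) * pr p (fun ω => X ω = x ∧ W ω = w) := by
    convert (condIndepRV_iff hp).1 h y w x using 2 <;> exact pr_congr fun ω => by tauto
  unfold pmi
  rcases (pr_nonneg hp fun ω => X ω = x ∧ Y ω = y ∧ W ω = w).eq_or_lt with ha | ha
  · rw [← ha, zero_sub, zero_mul, neg_nonpos]
    exact div_nonneg (mul_nonneg (pr_nonneg hp _) (pr_nonneg hp _)) (pr_nonneg hp _)
  have hXY : 0 < pr p (fun ω => X ω = x ∧ Y ω = y) :=
    ha.trans_le (pr_mono hp fun ω h => ⟨h.1, h.2.1⟩)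
  have hXW : 0 < pr p (fun ω => X ω = x ∧ W ω = w) :=
    ha.trans_le (pr_mono hp fun ω h => ⟨h.1, h.2.2⟩)
  have hYW : 0 < pr p (fun ω => Y ω = y ∧ W ω = w) := ha.trans_le (pr_mono hp fun ω h => h.2)
  have hX : 0 < pr p (fun ω => X ω = x) := hXY.trans_le (pr_mono hp fun ω h => h.1)
  have hY : 0 < pr p (fun ω => Y ω = y) := hYW.trans_le (pr_mono hp fun ω h => h.1)
  have hW : 0 < pr p (fun ω => W ω = w) := hYW.trans_le (pr_mono hp fun ω h => h.2)
  rw [← log_div (by positivity) (by positivity)]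
  have hratio : pr p (fun ω => X ω = x ∧ W ω = w) /
        (pr p (fun ω => X ω = x) * pr p (fun ω => W ω = w)) /
      (pr p (fun ω => Y ω = y ∧ W ω = w) / (pr p (fun ω => Y ω = y) * pr p (fun ω => W ω = w))) =
        pr p (fun ω => X ω = x ∧ Y ω = y ∧ W ω = w) /
          (pr p (fun ω => X ω = x ∧ Y ω = y) * pr p (fun ω => Y ω = y ∧ W ω = w) /
            pr p (fun ω => Y ω = y)) := by
    field_simp
    linear_combination -hchain
  rw [hratio]
  exact sub_le_mul_log_div ha.le (by positivity) fun _ => by positivity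

variable [Fintype A] [Fintype B] [Fintype C]

lemma mInfo_eq_sum (hp : ∀ ω, 0 ≤ p ω) (X : Ω → A) (Y : Ω → B) :
    mInfo p X Y = ∑ x, ∑ y, pr p (fun ω => X ω = x ∧ Y ω = y) * pmi p X Y x y := by
  refine Finset.sum_congr rfl fun x _ => Finset.sum_congr rfl fun y _ => ?_
  rcases (pr_nonneg hp fun ω => X ω = x ∧ Y ω = y).eq_or_lt with h | h
  · simp [← h]
  · simp [h, pmi]

lemma sum_pr_mul_eq_sum_pr_and_mul (X : Ω → A) (Y : Ω → B) (W : Ω → C) (f : A → C → ℝ) :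
    ∑ x, ∑ w, pr p (fun ω => X ω = x ∧ W ω = w) * f x w =
      ∑ x, ∑ y, ∑ w, pr p (fun ω => X ω = x ∧ Y ω = y ∧ W ω = w) * f x w := by
  refine Finset.sum_congr rfl fun x _ => ?_
  rw [Finset.sum_comm]
  refine Finset.sum_congr rfl fun w _ => ?_
  rw [← Finset.sum_mul,
    sum_pr_of_iff Y (E := fun ω => X ω = x ∧ W ω = w) fun _ _ => and_left_comm]

lemma sum_pr_mul_pr_div_pr (X : Ω → A) (Y : Ω → B) (W : Ω → C) :
    ∑ x, ∑ y, ∑ w, pr p (fun ω => X ω = x ∧ Y ω = y) * pr p (fun ω => Y ω = y ∧ W ω = w) /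
        pr p (fun ω => Y ω = y) =
      ∑ x, ∑ y, ∑ w, pr p (fun ω => X ω = x ∧ Y ω = y ∧ W ω = w) := by
  calc _ = ∑ y, ∑ x, ∑ w, pr p (fun ω => X ω = x ∧ Y ω = y) *
          pr p (fun ω => Y ω = y ∧ W ω = w) / pr p (fun ω => Y ω = y) := Finset.sum_comm
    _ = ∑ y, pr p (fun ω => Y ω = y) := by
        refine Finset.sum_congr rfl fun y _ => ?_
        simp only [← Finset.sum_div, ← Finset.sum_mul_sum]
        rw [sum_pr_of_iff X fun _ _ => Iff.rfl,
          sum_pr_of_iff W (E := fun ω => Y ω = y) fun _ _ => and_comm, mul_self_div_self]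
    _ = ∑ x, ∑ y, pr p (fun ω => X ω = x ∧ Y ω = y) := by
        rw [Finset.sum_comm]
        exact Finset.sum_congr rfl fun y _ => (sum_pr_of_iff X fun _ _ => Iff.rfl).symm
    _ = _ := by
        refine Finset.sum_congr rfl fun x _ => Finset.sum_congr rfl fun y _ => ?_
        exact (sum_pr_of_iff W fun _ _ => by tauto).symm

theorem mInfo_le_mInfo_of_condIndepRV (hp : ∀ ω, 0 ≤ p ω) {X : Ω → A} {Y : Ω → B} {W : Ω → C}
    (h : CondIndepRV p Y W X) : mInfo p Y W ≤ mInfo p X W := by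
  have hY : mInfo p Y W =
      ∑ x, ∑ y, ∑ w, pr p (fun ω => X ω = x ∧ Y ω = y ∧ W ω = w) * pmi p Y W y w := by
    rw [mInfo_eq_sum hp, sum_pr_mul_eq_sum_pr_and_mul Y X W, Finset.sum_comm]
    simp only [pr_congr fun ω => and_left_comm (a := Y ω = _)]
  rw [hY, mInfo_eq_sum hp, sum_pr_mul_eq_sum_pr_and_mul X Y W, ← sub_nonneg]
  calc (0 : ℝ) = ∑ x, ∑ y, ∑ w, (pr p (fun ω => X ω = x ∧ Y ω = y ∧ W ω = w) -
        pr p (fun ω => X ω = x ∧ Y ω = y) * pr p (fun ω => Y ω = y ∧ W ω = w) /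
          pr p (fun ω => Y ω = y)) := by
        simp only [Finset.sum_sub_distrib, sum_pr_mul_pr_div_pr, sub_self]
    _ ≤ _ := by
        simp only [← Finset.sum_sub_distrib, ← mul_sub]
        exact Finset.sum_le_sum fun x _ => Finset.sum_le_sum fun y _ =>
          Finset.sum_le_sum fun w _ => pr_sub_le_mul_pmi_sub_pmi hp h x y w

end MutualInformation

theorem stmt4_general {Ω Θ D T Z : Type*} [Fintype Ω] [Fintype Θ] [Fintype D] [Fintype T] [Fintype Z]
    (p : Ω → ℝ) (hp : ∀ ω, 0 ≤ p ω)
    (θv : Ω → Θ) (Dv : Ω → D) (Tv : Ω → T) (Zv : Ω → Z)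
    (hCI1 : CondIndepRV p Tv (fun ω => (Dv ω, Zv ω)) θv)
    (hCI2 : CondIndepRV p Zv θv Dv) :
    mInfo p Zv Tv ≤ mInfo p Dv Tv :=
  mInfo_le_mInfo_of_condIndepRV hp (CondIndepRV.of_markov hp hCI1 hCI2)

theorem stmt4 {Ω Θ D T Z : Type*} [Fintype Ω] [Fintype Θ] [Fintype D] [Fintype T] [Fintype Z]
    (p : Ω → ℝ) (hp : ∀ ω, 0 ≤ p ω) (hps : ∑ ω, p ω = 1)
    (θv : Ω → Θ) (Dv : Ω → D) (Tv : Ω → T) (Zv : Ω → Z)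
    (hCI1 : CondIndepRV p Tv (fun ω => (Dv ω, Zv ω)) θv)
    (hCI2 : CondIndepRV p Zv θv Dv) :
    mInfo p Zv Tv ≤ mInfo p Dv Tv :=
  stmt4_general p hp θv Dv Tv Zv hCI1 hCI2
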